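/- Let Φ₁,…,Φₙ be normalized (unital) positive linear maps from B(𝓗) to B(𝓚), A₁,…,Aₙ self-adjoint operators with m·1 ≤ Aᵢ ≤ M·1 (m < M), and w₁,…,wₙ ≥ 0 with Σwᵢ = 1. If f : [m,M] → (0,∞) is log-convex and g is continuous on [m,M], then for any α ∈ ℝ: Σᵢ wᵢ Φᵢ(f(Aᵢ)) ≤ Σᵢ wᵢ Φᵢ( exp( ((M·1-Aᵢ)/(M-m))·ln f(m) + ((Aᵢ-m·1)/(M-m))·ln f(M) ) ) ≤ α·g( Σᵢ wᵢ Φᵢ(Aᵢ) ) + β·1, where β = max_{m ≤ t ≤ M} { a_f·t + b_f - α·g(t) }, a_f = (f(M)-f(m))/(M-m), b_f = (M f(m) - m f(M))/(M-m). -/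

import Mathlib

/-!
On `[m, M]` write `t = (1 - v) m + v M`. Log-convexity at the endpoints gives
`f t ≤ f(m)^(1-v) f(M)^v`, the exponential of the linear interpolation of `log f`; weighted AM–GM
bounds this by the chord `a_f t + b_f`, and the chord is at most `α g t + β` by the choice of `β`.
The spectra of the `Aᵢ` and of `S = Σ wᵢ Φᵢ(Aᵢ)` lie in `[m, M]`, so the functional calculus
turns the first two scalar inequalities into operator inequalities for each `Aᵢ` and the last one
into one for `S`; positive unital maps are monotone and carry the affine chord of `Aᵢ` to the
same affine expression in `Φᵢ(Aᵢ)`, which links the two.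
-/

open Set Real

noncomputable def logLinearInterp (f : ℝ → ℝ) (m M t : ℝ) : ℝ :=
  exp ((M - t) / (M - m) * log (f m) + (t - m) / (M - m) * log (f M))

noncomputable def chord (f : ℝ → ℝ) (m M t : ℝ) : ℝ :=
  (f M - f m) / (M - m) * t + (M * f m - m * f M) / (M - m)

section LogConvex

variable {f : ℝ → ℝ} {m M t : ℝ}

lemma continuous_logLinearInterp : Continuous (logLinearInterp f m M) := by
  unfold logLinearInterp
  fun_prop

lemma continuous_chord : Continuous (chord f m M) := by
  unfold chord
  fun_prop

lemma sub_div_sub_mem_Icc (ht : t ∈ Icc m M) : (t - m) / (M - m) ∈ Icc (0 : ℝ) 1 := by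
  rcases eq_or_lt_of_le (ht.1.trans ht.2) with rfl | hmM
  · simp
  · exact ⟨div_nonneg (by linarith [ht.1]) (by linarith),
      (div_le_one (by linarith)).mpr (by linarith [ht.2])⟩

lemma logLinearInterp_eq_rpow (hmM : m ≠ M) (hm : 0 < f m) (hM : 0 < f M) (t : ℝ) :
    logLinearInterp f m M t =
      f m ^ (1 - (t - m) / (M - m)) * f M ^ ((t - m) / (M - m)) := by
  have hMm : M - m ≠ 0 := sub_ne_zero.mpr hmM.symm
  rw [rpow_def_of_pos hm, rpow_def_of_pos hM, ← exp_add, logLinearInterp]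
  congr 1
  field_simp
  ring

lemma le_logLinearInterp (hmM : m < M) (hm : 0 < f m) (hM : 0 < f M)
    (hlc : ∀ v ∈ Icc (0 : ℝ) 1, f ((1 - v) * m + v * M) ≤ f m ^ (1 - v) * f M ^ v)
    (ht : t ∈ Icc m M) : f t ≤ logLinearInterp f m M t := by
  have hpt : (1 - (t - m) / (M - m)) * m + (t - m) / (M - m) * M = t := by
    field_simp [(sub_pos.mpr hmM).ne']
    ring
  simpa only [logLinearInterp_eq_rpow hmM.ne hm hM, hpt] using
    hlc _ (sub_div_sub_mem_Icc ht)

lemma logLinearInterp_le_chord (hmM : m < M) (hm : 0 < f m) (hM : 0 < f M)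
    (ht : t ∈ Icc m M) : logLinearInterp f m M t ≤ chord f m M t := by
  obtain ⟨hv0, hv1⟩ := sub_div_sub_mem_Icc ht
  calc logLinearInterp f m M t
      = f m ^ (1 - (t - m) / (M - m)) * f M ^ ((t - m) / (M - m)) :=
        logLinearInterp_eq_rpow hmM.ne hm hM t
    _ ≤ (1 - (t - m) / (M - m)) * f m + (t - m) / (M - m) * f M :=
        geom_mean_le_arith_mean2_weighted (by linarith) hv0 hm.le hM.le (by ring)
    _ = chord f m M t := by
        rw [chord]
        field_simp [(sub_pos.mpr hmM).ne']
        ring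

end LogConvex

section CFC

variable {A : Type*} [CStarAlgebra A]

lemma cfc_const_mul_add_const (f : ℝ → ℝ) (a : A) (c d : ℝ)
    (hf : ContinuousOn f (spectrum ℝ a)) (ha : IsSelfAdjoint a) :
    cfc (fun t ↦ c * f t + d) a = c • cfc f a + d • 1 := by
  rw [cfc_add .., cfc_const_mul .., cfc_const .., Algebra.algebraMap_eq_smul_one]

lemma cfc_affine (a : A) (c d : ℝ) (ha : IsSelfAdjoint a) :
    cfc (fun t ↦ c * t + d) a = c • a + d • 1 := by
  simpa only [cfc_id ℝ a, id] using cfc_const_mul_add_const id a c d continuousOn_id ha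

variable [PartialOrder A] [StarOrderedRing A]

lemma IsSelfAdjoint.spectrum_subset_Icc {a : A} (ha : IsSelfAdjoint a) {m M : ℝ}
    (hm : m • 1 ≤ a) (hM : a ≤ M • 1) : spectrum ℝ a ⊆ Icc m M := by
  rw [← Algebra.algebraMap_eq_smul_one] at hm hM
  exact fun x hx ↦ ⟨(algebraMap_le_iff_le_spectrum ha).mp hm x hx,
    (le_algebraMap_iff_spectrum_le ha).mp hM x hx⟩

lemma cfc_le_cfc_of_nonneg {f g : ℝ → ℝ} {a : A} (hfg : ∀ x ∈ spectrum ℝ a, f x ≤ g x)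
    (hf : ∀ x ∈ spectrum ℝ a, 0 ≤ f x) (hg : ContinuousOn g (spectrum ℝ a)) :
    cfc f a ≤ cfc g a := by
  -- `f` need not be continuous: otherwise `cfc f a = 0`, and `0 ≤ cfc g a` since `g ≥ f ≥ 0`.
  by_cases hfc : ContinuousOn f (spectrum ℝ a)
  · exact cfc_mono hfg
  · rw [cfc_apply_of_not_continuousOn a hfc]
    exact cfc_nonneg fun x hx ↦ (hf x hx).trans (hfg x hx)

end CFC

section PositiveMaps

variable {ι E F : Type*} [Fintype ι] [CStarAlgebra E] [CStarAlgebra F]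
  {Φ : ι → E →ₗ[ℂ] F} {w : ι → ℝ}

lemma sum_smul_map_smul_one (hΦ1 : ∀ i, Φ i 1 = 1) (hw1 : ∑ i, w i = 1) (r : ℝ) :
    ∑ i, w i • Φ i (r • 1) = r • 1 := by
  simp only [LinearMap.map_smul_of_tower, hΦ1, smul_smul, ← Finset.sum_smul,
    ← Finset.sum_mul, hw1, one_mul]

lemma sum_smul_map_affine (hΦ1 : ∀ i, Φ i 1 = 1) (hw1 : ∑ i, w i = 1) (X : ι → E) (c d : ℝ) :
    ∑ i, w i • Φ i (c • X i + d • 1) = c • ∑ i, w i • Φ i (X i) + d • 1 := by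
  rw [← sum_smul_map_smul_one hΦ1 hw1 d]
  simp only [map_add, smul_add, Finset.sum_add_distrib, LinearMap.map_smul_of_tower,
    Finset.smul_sum, smul_comm c]

variable [PartialOrder E] [StarOrderedRing E] [PartialOrder F] [StarOrderedRing F]

lemma sum_smul_map_mono (hΦ : ∀ i, ∀ T, 0 ≤ T → 0 ≤ Φ i T) (hw : ∀ i, 0 ≤ w i)
    {X Y : ι → E} (h : ∀ i, X i ≤ Y i) :
    ∑ i, w i • Φ i (X i) ≤ ∑ i, w i • Φ i (Y i) :=
  Finset.sum_le_sum fun i _ ↦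
    smul_le_smul_of_nonneg_left ((PositiveLinearMap.mk₀ (Φ i) (hΦ i)).monotone' (h i)) (hw i)

lemma smul_one_le_sum_smul_map (hΦ : ∀ i, ∀ T, 0 ≤ T → 0 ≤ Φ i T) (hΦ1 : ∀ i, Φ i 1 = 1)
    (hw : ∀ i, 0 ≤ w i) (hw1 : ∑ i, w i = 1) {X : ι → E} {r : ℝ} (h : ∀ i, r • 1 ≤ X i) :
    r • 1 ≤ ∑ i, w i • Φ i (X i) := by
  simpa only [sum_smul_map_smul_one hΦ1 hw1] using sum_smul_map_mono hΦ hw h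

lemma sum_smul_map_le_smul_one (hΦ : ∀ i, ∀ T, 0 ≤ T → 0 ≤ Φ i T) (hΦ1 : ∀ i, Φ i 1 = 1)
    (hw : ∀ i, 0 ≤ w i) (hw1 : ∑ i, w i = 1) {X : ι → E} {r : ℝ} (h : ∀ i, X i ≤ r • 1) :
    ∑ i, w i • Φ i (X i) ≤ r • 1 := by
  simpa only [sum_smul_map_smul_one hΦ1 hw1] using sum_smul_map_mono hΦ hw h

end PositiveMaps

theorem stmt_13 {H K : Type*}
    [NormedAddCommGroup H] [InnerProductSpace ℂ H] [CompleteSpace H]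
    [NormedAddCommGroup K] [InnerProductSpace ℂ K] [CompleteSpace K]
    (n : ℕ) (Φ : Fin n → ((H →L[ℂ] H) →ₗ[ℂ] (K →L[ℂ] K)))
    (hΦpos : ∀ i, ∀ T : H →L[ℂ] H, 0 ≤ T → 0 ≤ Φ i T)
    (hΦunital : ∀ i, Φ i 1 = 1)
    (A : Fin n → (H →L[ℂ] H)) (hAsa : ∀ i, IsSelfAdjoint (A i))
    (m M : ℝ) (hmM : m < M)
    (hmA : ∀ i, m • (1 : H →L[ℂ] H) ≤ A i) (hAM : ∀ i, A i ≤ M • (1 : H →L[ℂ] H))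
    (w : Fin n → ℝ) (hw : ∀ i, 0 ≤ w i) (hw1 : ∑ i, w i = 1)
    (f : ℝ → ℝ) (hfpos : ∀ x ∈ Set.Icc m M, 0 < f x)
    (hlc : ∀ x ∈ Set.Icc m M, ∀ y ∈ Set.Icc m M, ∀ v ∈ Set.Icc (0 : ℝ) 1,
      f ((1 - v) * x + v * y) ≤ f x ^ (1 - v) * f y ^ v)
    (g : ℝ → ℝ) (hg : ContinuousOn g (Set.Icc m M))
    (α : ℝ) (β : ℝ)
    (hβ : IsGreatest ((fun t => ((f M - f m) / (M - m)) * t +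
      (M * f m - m * f M) / (M - m) - α * g t) '' Set.Icc m M) β) :
    (∑ i, w i • Φ i (cfc f (A i))) ≤
      (∑ i, w i • Φ i (cfc (fun t : ℝ => Real.exp (((M - t) / (M - m)) * Real.log (f m) +
        ((t - m) / (M - m)) * Real.log (f M))) (A i))) ∧
    (∑ i, w i • Φ i (cfc (fun t : ℝ => Real.exp (((M - t) / (M - m)) * Real.log (f m) +
        ((t - m) / (M - m)) * Real.log (f M))) (A i))) ≤
      α • cfc g (∑ i, w i • Φ i (A i)) + β • (1 : K →L[ℂ] K) := by
  have hm : m ∈ Icc m M := left_mem_Icc.2 hmM.le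
  have hM : M ∈ Icc m M := right_mem_Icc.2 hmM.le
  have hfm := hfpos m hm
  have hfM := hfpos M hM
  have hspec i : spectrum ℝ (A i) ⊆ Icc m M := (hAsa i).spectrum_subset_Icc (hmA i) (hAM i)
  set S := ∑ i, w i • Φ i (A i)
  have hmS : m • 1 ≤ S := smul_one_le_sum_smul_map hΦpos hΦunital hw hw1 hmA
  have hSM : S ≤ M • 1 := sum_smul_map_le_smul_one hΦpos hΦunital hw hw1 hAM
  have hS : IsSelfAdjoint S := ((IsSelfAdjoint.all m).smul (.one _)).of_ge hmS
  have hspecS : spectrum ℝ S ⊆ Icc m M := hS.spectrum_subset_Icc hmS hSM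
  change _ ≤ ∑ i, w i • Φ i (cfc (logLinearInterp f m M) (A i)) ∧
    ∑ i, w i • Φ i (cfc (logLinearInterp f m M) (A i)) ≤ _
  refine ⟨sum_smul_map_mono hΦpos hw fun i ↦ cfc_le_cfc_of_nonneg
    (fun x hx ↦ le_logLinearInterp hmM hfm hfM (hlc m hm M hM) (hspec i hx))
    (fun x hx ↦ (hfpos x (hspec i hx)).le) continuous_logLinearInterp.continuousOn, ?_⟩
  calc ∑ i, w i • Φ i (cfc (logLinearInterp f m M) (A i))
      ≤ ∑ i, w i • Φ i (((f M - f m) / (M - m)) • A i + ((M * f m - m * f M) / (M - m)) • 1) :=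
        sum_smul_map_mono hΦpos hw fun i ↦ by
          rw [← cfc_affine (A i) _ _ (hAsa i)]
          exact cfc_mono (fun x hx ↦ logLinearInterp_le_chord hmM hfm hfM (hspec i hx))
            continuous_logLinearInterp.continuousOn continuous_chord.continuousOn
    _ = cfc (chord f m M) S :=
        (sum_smul_map_affine hΦunital hw1 A _ _).trans (cfc_affine S _ _ hS).symm
    _ ≤ cfc (fun t ↦ α * g t + β) S :=
        cfc_mono (fun x hx ↦ by
          have hβx := hβ.2 (mem_image_of_mem _ (hspecS hx))
          rw [chord]
          linarith)
          continuous_chord.continuousOn ((continuousOn_const.mul (hg.mono hspecS)).add continuousOn_const)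
    _ = α • cfc g S + β • 1 := cfc_const_mul_add_const g S α β (hg.mono hspecS) hS
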